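/- Let O be a discrete valuation ring with fraction field K, maximal ideal m, residue field k = O/m, and reduction map x ↦ x̃. Let A, B ∈ O[X,Y] be binary quadratic forms with Res(A,B) ∈ O^×. Let P₁ = (α₁, β₁) and P₂ = (α₂, β₂) be elements of O² with α₂β₁ − α₁β₂ ∈ O^×. Assume: (i) each Pᵢ is a projective fixed point of φ = (A : B), i.e. βᵢ·A(αᵢ, βᵢ) = αᵢ·B(αᵢ, βᵢ) for i = 1, 2; and (ii) for i = 1, 2, the reduction modulo m of the binary quadratic form βᵢA − αᵢB (which vanishes at Pᵢ) is not divisible by (β̃ᵢX − α̃ᵢY)² in k[X,Y] (i.e., the reduced point is an unramified fixed point of the reduced map). Let M be the matrix with columns P₁, P₂ and define forms (C, D) = M^{-1} ∘ (A, B) ∘ M. Then there exist u ∈ K^× and a, b, c ∈ O^× with c(c − ab) ∈ O^× such that C(X,Y) = u·(X² + aXY) and D(X,Y) = u·(bXY + cY²). -/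

import Mathlib

open IsLocalRing MvPolynomial

/-- The value of the binary quadratic form `p·X² + q·XY + r·Y²` at the point `(x, y)`. -/
def qform {R : Type*} [CommRing R] (p q r x y : R) : R :=
  p * x ^ 2 + q * x * y + r * y ^ 2

/-- The binary quadratic form `p·X² + q·XY + r·Y²` as a polynomial in two variables. -/
noncomputable def bqf {k : Type*} [CommRing k] (p q r : k) : MvPolynomial (Fin 2) k :=
  C p * X 0 ^ 2 + C q * X 0 * X 1 + C r * X 1 ^ 2

set_option maxHeartbeats 4000000 in
set_option maxRecDepth 100000 in
private lemma resAux {R : Type*} [CommRing R] (a0 a1 a2 b0 b1 b2 α₁ β₁ α₂ β₂ : R)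
    (hfx1 : β₁ * (a0*α₁^2 + a1*α₁*β₁ + a2*β₁^2) = α₁ * (b0*α₁^2 + b1*α₁*β₁ + b2*β₁^2))
    (hfx2 : β₂ * (a0*α₂^2 + a1*α₂*β₂ + a2*β₂^2) = α₂ * (b0*α₂^2 + b1*α₂*β₂ + b2*β₂^2)) :
    (β₂ * (a0*α₁^2 + a1*α₁*β₁ + a2*β₁^2) - α₂ * (b0*α₁^2 + b1*α₁*β₁ + b2*β₁^2)) * ((α₁ * (b0*α₂^2 + b1*α₂*β₂ + b2*β₂^2) - β₁ * (a0*α₂^2 + a1*α₂*β₂ + a2*β₂^2)) * ((β₂ * (a0*α₁^2 + a1*α₁*β₁ + a2*β₁^2) - α₂ * (b0*α₁^2 + b1*α₁*β₁ + b2*β₁^2)) * (α₁ * (b0*α₂^2 + b1*α₂*β₂ + b2*β₂^2) - β₁ * (a0*α₂^2 + a1*α₂*β₂ + a2*β₂^2)) - (β₂ * (2*a0*α₁*α₂ + a1*(α₁*β₂+α₂*β₁) + 2*a2*β₁*β₂) - α₂ * (2*b0*α₁*α₂ + b1*(α₁*β₂+α₂*β₁) + 2*b2*β₁*β₂)) *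 (α₁ * (2*b0*α₁*α₂ + b1*(α₁*β₂+α₂*β₁) + 2*b2*β₁*β₂) - β₁ * (2*a0*α₁*α₂ + a1*(α₁*β₂+α₂*β₁) + 2*a2*β₁*β₂))))
    = (α₁*β₂ - α₂*β₁)^6 * (a0^2*b2^2 - a0*a1*b1*b2 - 2*a0*a2*b0*b2 + a0*a2*b1^2 + a1^2*b0*b2 - a1*a2*b0*b1 + a2^2*b0^2) := by
  linear_combination (2*(β₂ * (a0*α₁^2 + a1*α₁*β₁ + a2*β₁^2) - α₂ * (b0*α₁^2 + b1*α₁*β₁ + b2*β₁^2))*(α₁ * (b0*α₁^2 + b1*α₁*β₁ + b2*β₁^2) - β₁ * (a0*α₁^2 + a1*α₁*β₁ + a2*β₁^2))*(α₁ * (b0*α₂^2 + b1*α₂*β₂ + b2*β₂^2) - β₁ * (a0*α₂^2 + a1*α₂*β₂ + a2*β₂^2)) - (β₂ * (a0*α₁^2 + a1*α₁*β₁ + a2*β₁^2) - α₂ * (b0*α₁^2 + b1*α₁*β₁ + b2*β₁^2))*(α₁ * (2*b0*α₁*α₂ + b1*(α₁*β₂+α₂*β₁) + 2*b2*β₁*β₂)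 - β₁ * (2*a0*α₁*α₂ + a1*(α₁*β₂+α₂*β₁) + 2*a2*β₁*β₂))^2 + (β₂ * (2*a0*α₁*α₂ + a1*(α₁*β₂+α₂*β₁) + 2*a2*β₁*β₂) - α₂ * (2*b0*α₁*α₂ + b1*(α₁*β₂+α₂*β₁) + 2*b2*β₁*β₂))*(α₁ * (b0*α₁^2 + b1*α₁*β₁ + b2*β₁^2) - β₁ * (a0*α₁^2 + a1*α₁*β₁ + a2*β₁^2))*(α₁ * (2*b0*α₁*α₂ + b1*(α₁*β₂+α₂*β₁) + 2*b2*β₁*β₂) - β₁ * (2*a0*α₁*α₂ + a1*(α₁*β₂+α₂*β₁) + 2*a2*β₁*β₂)) - (β₂ * (a0*α₂^2 + a1*α₂*β₂ + a2*β₂^2) - α₂ * (b0*α₂^2 + b1*α₂*β₂ + b2*β₂^2))*(α₁ * (b0*α₁^2 + b1*α₁*β₁ + b2*β₁^2) - β₁ * (a0*α₁^2 + a1*α₁*β₁ + a2*β₁^2))^2) * hfx2 + ((β₂ * (2*a0*α₁*α₂ + a1*(α₁*β₂+α₂*β₁) + 2*a2*β₁*β₂) - α₂ * (2*b0*α₁*α₂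 + b1*(α₁*β₂+α₂*β₁) + 2*b2*β₁*β₂))^2*(α₁ * (b0*α₂^2 + b1*α₂*β₂ + b2*β₂^2) - β₁ * (a0*α₂^2 + a1*α₂*β₂ + a2*β₂^2))) * hfx1

private lemma sqLinC {k : Type*} [CommRing k] (p q w : k) :
    bqf (p^2 * w) (-(2 * (p * q * w))) (q^2 * w)
      = (C p * X 0 - C q * X 1 : MvPolynomial (Fin 2) k)^2 * C w := by
  simp only [bqf, map_mul, map_pow, map_neg, map_ofNat]
  ring

private lemma auxC {R : Type*} [CommRing R] (a0 a1 a2 b0 b1 b2 α₁ β₁ α₂ β₂ dv e0 e1 a x y : R)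
    (h2 : β₂ * (a0*α₂^2 + a1*α₂*β₂ + a2*β₂^2) = α₂ * (b0*α₂^2 + b1*α₂*β₂ + b2*β₂^2))
    (hd : (α₁*β₂ - α₂*β₁) * dv = 1)
    (he0 : e0 = β₂ * (a0*α₁^2 + a1*α₁*β₁ + a2*β₁^2) - α₂ * (b0*α₁^2 + b1*α₁*β₁ + b2*β₁^2))
    (he1 : e1 = β₂ * (2*a0*α₁*α₂ + a1*(α₁*β₂+α₂*β₁) + 2*a2*β₁*β₂) - α₂ * (2*b0*α₁*α₂ + b1*(α₁*β₂+α₂*β₁) + 2*b2*β₁*β₂))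
    (ha : e0 * a = e1) :
    β₂ * (a0 * (α₁*x + α₂*y)^2 + a1 * (α₁*x + α₂*y) * (β₁*x + β₂*y) + a2 * (β₁*x + β₂*y)^2)
      - α₂ * (b0 * (α₁*x + α₂*y)^2 + b1 * (α₁*x + α₂*y) * (β₁*x + β₂*y) + b2 * (β₁*x + β₂*y)^2)
    = e0 * dv * (x^2 + a * x * y) * (α₁*β₂ - α₂*β₁) := by
  linear_combination y^2 * h2 - x^2 * he0 - e0*x^2 * hd - x*y * he1 - x*y * ha - e0*a*x*y * hd

private lemma auxD {R : Type*} [CommRing R] (a0 a1 a2 b0 b1 b2 α₁ β₁ α₂ β₂ dv e0 f1 f2 b c x y : R)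
    (h1 : β₁ * (a0*α₁^2 + a1*α₁*β₁ + a2*β₁^2) = α₁ * (b0*α₁^2 + b1*α₁*β₁ + b2*β₁^2))
    (hd : (α₁*β₂ - α₂*β₁) * dv = 1)
    (hf1 : f1 = α₁ * (2*b0*α₁*α₂ + b1*(α₁*β₂+α₂*β₁) + 2*b2*β₁*β₂) - β₁ * (2*a0*α₁*α₂ + a1*(α₁*β₂+α₂*β₁) + 2*a2*β₁*β₂))
    (hf2 : f2 = α₁ * (b0*α₂^2 + b1*α₂*β₂ + b2*β₂^2) - β₁ * (a0*α₂^2 + a1*α₂*β₂ + a2*β₂^2))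
    (hb : e0 * b = f1) (hc : e0 * c = f2) :
    α₁ * (b0 * (α₁*x + α₂*y)^2 + b1 * (α₁*x + α₂*y) * (β₁*x + β₂*y) + b2 * (β₁*x + β₂*y)^2)
      - β₁ * (a0 * (α₁*x + α₂*y)^2 + a1 * (α₁*x + α₂*y) * (β₁*x + β₂*y) + a2 * (β₁*x + β₂*y)^2)
    = e0 * dv * (b * x * y + c * y^2) * (α₁*β₂ - α₂*β₁) := by
  linear_combination -(x^2) * h1 - x*y * hf1 - x*y * hb - e0*b*x*y * hd - y^2 * hf2 - y^2 * hc - e0*c*y^2 * hd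

set_option maxHeartbeats 4000000 in
set_option maxRecDepth 100000 in
theorem good_reduction_local_normal_form_fixed_points
    (O : Type*) [CommRing O] [IsDomain O] [IsDiscreteValuationRing O]
    (K : Type*) [Field K] [Algebra O K] [IsFractionRing O K]
    (a0 a1 a2 b0 b1 b2 : O)
    (hres : IsUnit (Matrix.det
      !![a0, a1, a2, 0; 0, a0, a1, a2; b0, b1, b2, 0; 0, b0, b1, b2]))
    (α₁ β₁ α₂ β₂ : O)
    (hM : IsUnit (α₂ * β₁ - α₁ * β₂))
    -- (i) each `Pᵢ` is a projective fixed point of `φ = (A : B)`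
    (hfix1 : β₁ * qform a0 a1 a2 α₁ β₁ = α₁ * qform b0 b1 b2 α₁ β₁)
    (hfix2 : β₂ * qform a0 a1 a2 α₂ β₂ = α₂ * qform b0 b1 b2 α₂ β₂)
    -- (ii) each reduced point is an unramified fixed point of the reduced map
    (hunr1 : ¬ ((C (residue O β₁) * X 0 - C (residue O α₁) * X 1) ^ 2 ∣
      bqf (residue O (β₁ * a0 - α₁ * b0)) (residue O (β₁ * a1 - α₁ * b1))
        (residue O (β₁ * a2 - α₁ * b2))))
    (hunr2 : ¬ ((C (residue O β₂) * X 0 - C (residue O α₂) * X 1) ^ 2 ∣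
      bqf (residue O (β₂ * a0 - α₂ * b0)) (residue O (β₂ * a1 - α₂ * b1))
        (residue O (β₂ * a2 - α₂ * b2)))) :
    ∃ u : K, u ≠ 0 ∧ ∃ a b c : O, IsUnit a ∧ IsUnit b ∧ IsUnit c ∧
      IsUnit (c * (c - a * b)) ∧
      ∀ x y : K,
        (algebraMap O K β₂ *
            qform (algebraMap O K a0) (algebraMap O K a1) (algebraMap O K a2)
              (algebraMap O K α₁ * x + algebraMap O K α₂ * y)
              (algebraMap O K β₁ * x + algebraMap O K β₂ * y)
          - algebraMap O K α₂ *
            qform (algebraMap O K b0) (algebraMap O K b1) (algebraMap O K b2)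
              (algebraMap O K α₁ * x + algebraMap O K α₂ * y)
              (algebraMap O K β₁ * x + algebraMap O K β₂ * y))
          / algebraMap O K (α₁ * β₂ - α₂ * β₁)
          = u * (x ^ 2 + algebraMap O K a * x * y) ∧
        (algebraMap O K α₁ *
            qform (algebraMap O K b0) (algebraMap O K b1) (algebraMap O K b2)
              (algebraMap O K α₁ * x + algebraMap O K α₂ * y)
              (algebraMap O K β₁ * x + algebraMap O K β₂ * y)
          - algebraMap O K β₁ *
            qform (algebraMap O K a0) (algebraMap O K a1) (algebraMap O K a2)
              (algebraMap O K α₁ * x + algebraMap O K α₂ * y)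
              (algebraMap O K β₁ * x + algebraMap O K β₂ * y))
          / algebraMap O K (α₁ * β₂ - α₂ * β₁)
          = u * (algebraMap O K b * x * y + algebraMap O K c * y ^ 2) := by
  simp only [qform] at hfix1 hfix2
  have hδ : IsUnit (α₁ * β₂ - α₂ * β₁) := by
    have h := hM.neg; rwa [neg_sub] at h
  obtain ⟨dv, hdv⟩ := hδ.exists_right_inv
  obtain ⟨e0, he0def⟩ : ∃ t : O, t = β₂ * (a0*α₁^2 + a1*α₁*β₁ + a2*β₁^2) - α₂ * (b0*α₁^2 + b1*α₁*β₁ + b2*β₁^2) := ⟨_, rfl⟩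
  obtain ⟨e1, he1def⟩ : ∃ t : O, t = β₂ * (2*a0*α₁*α₂ + a1*(α₁*β₂+α₂*β₁) + 2*a2*β₁*β₂) - α₂ * (2*b0*α₁*α₂ + b1*(α₁*β₂+α₂*β₁) + 2*b2*β₁*β₂) := ⟨_, rfl⟩
  obtain ⟨f1, hf1def⟩ : ∃ t : O, t = α₁ * (2*b0*α₁*α₂ + b1*(α₁*β₂+α₂*β₁) + 2*b2*β₁*β₂) - β₁ * (2*a0*α₁*α₂ + a1*(α₁*β₂+α₂*β₁) + 2*a2*β₁*β₂) := ⟨_, rfl⟩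
  obtain ⟨f2, hf2def⟩ : ∃ t : O, t = α₁ * (b0*α₂^2 + b1*α₂*β₂ + b2*β₂^2) - β₁ * (a0*α₂^2 + a1*α₂*β₂ + a2*β₂^2) := ⟨_, rfl⟩
  have hdet : Matrix.det !![a0, a1, a2, 0; 0, a0, a1, a2; b0, b1, b2, 0; 0, b0, b1, b2]
      = (a0^2*b2^2 - a0*a1*b1*b2 - 2*a0*a2*b0*b2 + a0*a2*b1^2 + a1^2*b0*b2 - a1*a2*b0*b1 + a2^2*b0^2) := by
    simp [Matrix.det_succ_row_zero, Fin.sum_univ_succ, Fin.succAbove]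
    ring
  rw [hdet] at hres
  have hkeyU : IsUnit (e0 * (f2 * (e0 * f2 - e1 * f1))) := by
    rw [he0def, he1def, hf1def, hf2def,
      resAux a0 a1 a2 b0 b1 b2 α₁ β₁ α₂ β₂ hfix1 hfix2]
    exact (hδ.pow 6).mul hres
  obtain ⟨he0U, hrest⟩ := IsUnit.mul_iff.mp hkeyU
  obtain ⟨hf2U, hQ⟩ := IsUnit.mul_iff.mp hrest
  have Jd : ((residue O α₁ * residue O β₂ - residue O α₂ * residue O β₁)) * residue O dv = 1 := by
    have h := congrArg (residue O) hdv
    simpa only [map_mul, map_sub, map_one] using h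
  -- e1 is a unit (unramifiedness at P₂)
  have he1U : IsUnit e1 := by
    by_contra h
    have hre1 : residue O e1 = 0 :=
      Ideal.Quotient.eq_zero_iff_mem.mpr ((mem_maximalIdeal _).mpr (mem_nonunits_iff.mpr h))
    apply hunr2
    have Jfix2 := congrArg (residue O) hfix2
    simp only [map_mul, map_add, map_pow] at Jfix2
    have I0 : (α₁*β₂ - α₂*β₁)^2 * (β₂ * a0 - α₂ * b0)
        = e0 * β₂^2 - e1 * (β₁*β₂) + (β₂ * (a0*α₂^2 + a1*α₂*β₂ + a2*β₂^2) - α₂ * (b0*α₂^2 + b1*α₂*β₂ + b2*β₂^2)) * β₁^2 := by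
      rw [he0def, he1def]; ring
    have I1 : (α₁*β₂ - α₂*β₁)^2 * (β₂ * a1 - α₂ * b1)
        = -(2*(α₂*β₂)) * e0 + (α₁*β₂ + α₂*β₁) * e1 - 2*(α₁*β₁) * (β₂ * (a0*α₂^2 + a1*α₂*β₂ + a2*β₂^2) - α₂ * (b0*α₂^2 + b1*α₂*β₂ + b2*β₂^2)) := by
      rw [he0def, he1def]; ring
    have I2 : (α₁*β₂ - α₂*β₁)^2 * (β₂ * a2 - α₂ * b2)
        = α₂^2 * e0 - (α₁*α₂) * e1 + α₁^2 * (β₂ * (a0*α₂^2 + a1*α₂*β₂ + a2*β₂^2) - α₂ * (b0*α₂^2 + b1*α₂*β₂ + b2*β₂^2)) := by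
      rw [he0def, he1def]; ring
    have J0 := congrArg (residue O) I0
    have J1 := congrArg (residue O) I1
    have J2 := congrArg (residue O) I2
    simp only [map_mul, map_sub, map_add, map_pow, map_neg, map_ofNat] at J0 J1 J2
    refine ⟨C (residue O e0 * residue O dv ^ 2), ?_⟩
    have h0k : residue O (β₂ * a0 - α₂ * b0) = (residue O β₂)^2 * (residue O e0 * residue O dv ^ 2) := by
      rw [map_sub, map_mul, map_mul]
      linear_combination residue O dv^2 * J0 - (residue O β₂ * residue O a0 - residue O α₂ * residue O b0) * ((residue O α₁ * residue O β₂ - residue O α₂ * residue O β₁) * residue O dv + 1) * Jd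
        - residue O dv^2 * (residue O β₁ * residue O β₂) * hre1 + residue O dv^2 * (residue O β₁)^2 * Jfix2
    have h1k : residue O (β₂ * a1 - α₂ * b1) = -(2 * (residue O β₂ * residue O α₂ * (residue O e0 * residue O dv ^ 2))) := by
      rw [map_sub, map_mul, map_mul]
      linear_combination residue O dv^2 * J1 - (residue O β₂ * residue O a1 - residue O α₂ * residue O b1) * ((residue O α₁ * residue O β₂ - residue O α₂ * residue O β₁) * residue O dv + 1) * Jd
        + residue O dv^2 * (residue O α₁ * residue O β₂ + residue O α₂ * residue O β₁) * hre1 - 2 * residue O dv^2 * (residue O α₁ * residue O β₁) * Jfix2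
    have h2k : residue O (β₂ * a2 - α₂ * b2) = (residue O α₂)^2 * (residue O e0 * residue O dv ^ 2) := by
      rw [map_sub, map_mul, map_mul]
      linear_combination residue O dv^2 * J2 - (residue O β₂ * residue O a2 - residue O α₂ * residue O b2) * ((residue O α₁ * residue O β₂ - residue O α₂ * residue O β₁) * residue O dv + 1) * Jd
        - residue O dv^2 * (residue O α₁ * residue O α₂) * hre1 + residue O dv^2 * (residue O α₁)^2 * Jfix2
    rw [h0k, h1k, h2k]
    exact sqLinC (residue O β₂) (residue O α₂) (residue O e0 * residue O dv ^ 2)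
  -- f1 is a unit (unramifiedness at P₁)
  have hf1U : IsUnit f1 := by
    by_contra h
    have hrf1 : residue O f1 = 0 :=
      Ideal.Quotient.eq_zero_iff_mem.mpr ((mem_maximalIdeal _).mpr (mem_nonunits_iff.mpr h))
    apply hunr1
    have Jfix1 := congrArg (residue O) hfix1
    simp only [map_mul, map_add, map_pow] at Jfix1
    have I0 : (α₁*β₂ - α₂*β₁)^2 * (β₁ * a0 - α₁ * b0)
        = (β₁ * (a0*α₁^2 + a1*α₁*β₁ + a2*β₁^2) - α₁ * (b0*α₁^2 + b1*α₁*β₁ + b2*β₁^2)) * β₂^2 + f1 * (β₁*β₂) - f2 * β₁^2 := by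
      rw [hf1def, hf2def]; ring
    have I1 : (α₁*β₂ - α₂*β₁)^2 * (β₁ * a1 - α₁ * b1)
        = -(2*(α₂*β₂)) * (β₁ * (a0*α₁^2 + a1*α₁*β₁ + a2*β₁^2) - α₁ * (b0*α₁^2 + b1*α₁*β₁ + b2*β₁^2)) - (α₁*β₂ + α₂*β₁) * f1 + 2*(α₁*β₁) * f2 := by
      rw [hf1def, hf2def]; ring
    have I2 : (α₁*β₂ - α₂*β₁)^2 * (β₁ * a2 - α₁ * b2)
        = α₂^2 * (β₁ * (a0*α₁^2 + a1*α₁*β₁ + a2*β₁^2) - α₁ * (b0*α₁^2 + b1*α₁*β₁ + b2*β₁^2)) + (α₁*α₂) * f1 - α₁^2 * f2 := by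
      rw [hf1def, hf2def]; ring
    have J0 := congrArg (residue O) I0
    have J1 := congrArg (residue O) I1
    have J2 := congrArg (residue O) I2
    simp only [map_mul, map_sub, map_add, map_pow, map_neg, map_ofNat] at J0 J1 J2
    refine ⟨C (-(residue O f2 * residue O dv ^ 2)), ?_⟩
    have h0k : residue O (β₁ * a0 - α₁ * b0) = (residue O β₁)^2 * (-(residue O f2 * residue O dv ^ 2)) := by
      rw [map_sub, map_mul, map_mul]
      linear_combination residue O dv^2 * J0 - (residue O β₁ * residue O a0 - residue O α₁ * residue O b0) * ((residue O α₁ * residue O β₂ - residue O α₂ * residue O β₁) * residue O dv + 1) * Jd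
        + residue O dv^2 * (residue O β₁ * residue O β₂) * hrf1 + residue O dv^2 * (residue O β₂)^2 * Jfix1
    have h1k : residue O (β₁ * a1 - α₁ * b1) = -(2 * (residue O β₁ * residue O α₁ * (-(residue O f2 * residue O dv ^ 2)))) := by
      rw [map_sub, map_mul, map_mul]
      linear_combination residue O dv^2 * J1 - (residue O β₁ * residue O a1 - residue O α₁ * residue O b1) * ((residue O α₁ * residue O β₂ - residue O α₂ * residue O β₁) * residue O dv + 1) * Jd
        - residue O dv^2 * (residue O α₁ * residue O β₂ + residue O α₂ * residue O β₁) * hrf1 - 2 * residue O dv^2 * (residue O α₂ * residue O β₂) * Jfix1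
    have h2k : residue O (β₁ * a2 - α₁ * b2) = (residue O α₁)^2 * (-(residue O f2 * residue O dv ^ 2)) := by
      rw [map_sub, map_mul, map_mul]
      linear_combination residue O dv^2 * J2 - (residue O β₁ * residue O a2 - residue O α₁ * residue O b2) * ((residue O α₁ * residue O β₂ - residue O α₂ * residue O β₁) * residue O dv + 1) * Jd
        + residue O dv^2 * (residue O α₁ * residue O α₂) * hrf1 + residue O dv^2 * (residue O α₂)^2 * Jfix1
    rw [h0k, h1k, h2k]
    exact sqLinC (residue O β₁) (residue O α₁) (-(residue O f2 * residue O dv ^ 2))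
  obtain ⟨ei, heinv⟩ := he0U.exists_right_inv
  have heiU : IsUnit ei := IsUnit.of_mul_eq_one e0 (by rwa [mul_comm] at heinv)
  have hdvU : IsUnit dv := IsUnit.of_mul_eq_one _ (by rwa [mul_comm] at hdv)
  refine ⟨algebraMap O K (e0 * dv), ?_, e1 * ei, f1 * ei, f2 * ei,
    he1U.mul heiU, hf1U.mul heiU, hf2U.mul heiU, ?_, ?_⟩
  · exact ((he0U.mul hdvU).map (algebraMap O K)).ne_zero
  · have hcc : (f2 * ei) * ((f2 * ei) - (e1 * ei) * (f1 * ei))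
        = (e0 * f2 - e1 * f1) * (f2 * ei^3) := by
      linear_combination (-(f2^2 * ei^2)) * heinv
    rw [hcc]
    exact hQ.mul (hf2U.mul (heiU.pow 3))
  · intro x y
    have hΔne : algebraMap O K (α₁ * β₂ - α₂ * β₁) ≠ 0 := by
      intro hc
      exact hδ.ne_zero (IsFractionRing.injective O K (by rw [hc, map_zero]))
    have hdK : (algebraMap O K α₁ * algebraMap O K β₂ - algebraMap O K α₂ * algebraMap O K β₁)
        * algebraMap O K dv = 1 := by
      have h := congrArg (algebraMap O K) hdv
      simpa only [map_mul, map_sub, map_one] using h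
    constructor
    · rw [div_eq_iff hΔne]
      have h2K := congrArg (algebraMap O K) hfix2
      simp only [map_mul, map_add, map_pow] at h2K
      have he0K : algebraMap O K e0 = algebraMap O K β₂ *
            (algebraMap O K a0 * (algebraMap O K α₁)^2 + algebraMap O K a1 * algebraMap O K α₁ * algebraMap O K β₁ + algebraMap O K a2 * (algebraMap O K β₁)^2)
          - algebraMap O K α₂ *
            (algebraMap O K b0 * (algebraMap O K α₁)^2 + algebraMap O K b1 * algebraMap O K α₁ * algebraMap O K β₁ + algebraMap O K b2 * (algebraMap O K β₁)^2) := by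
        rw [he0def]; simp only [map_sub, map_mul, map_add, map_pow]
      have he1K : algebraMap O K e1 = algebraMap O K β₂ *
            (2 * algebraMap O K a0 * algebraMap O K α₁ * algebraMap O K α₂ + algebraMap O K a1 * (algebraMap O K α₁ * algebraMap O K β₂ + algebraMap O K α₂ * algebraMap O K β₁) + 2 * algebraMap O K a2 * algebraMap O K β₁ * algebraMap O K β₂)
          - algebraMap O K α₂ *
            (2 * algebraMap O K b0 * algebraMap O K α₁ * algebraMap O K α₂ + algebraMap O K b1 * (algebraMap O K α₁ * algebraMap O K β₂ + algebraMap O K α₂ * algebraMap O K β₁) + 2 * algebraMap O K b2 * algebraMap O K β₁ * algebraMap O K β₂) := by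
        rw [he1def]; simp only [map_sub, map_mul, map_add, map_pow, map_ofNat]
      have haK : algebraMap O K e0 * (algebraMap O K e1 * algebraMap O K ei)
          = algebraMap O K e1 := by
        have h : e0 * (e1 * ei) = e1 := by linear_combination e1 * heinv
        have h2 := congrArg (algebraMap O K) h
        simpa only [map_mul] using h2
      simp only [qform, map_mul, map_sub]
      exact auxC _ _ _ _ _ _ _ _ _ _ _ _ _ _ x y h2K hdK he0K he1K haK
    · rw [div_eq_iff hΔne]
      have h1K := congrArg (algebraMap O K) hfix1
      simp only [map_mul, map_add, map_pow] at h1K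
      have hf1K : algebraMap O K f1 = algebraMap O K α₁ *
            (2 * algebraMap O K b0 * algebraMap O K α₁ * algebraMap O K α₂ + algebraMap O K b1 * (algebraMap O K α₁ * algebraMap O K β₂ + algebraMap O K α₂ * algebraMap O K β₁) + 2 * algebraMap O K b2 * algebraMap O K β₁ * algebraMap O K β₂)
          - algebraMap O K β₁ *
            (2 * algebraMap O K a0 * algebraMap O K α₁ * algebraMap O K α₂ + algebraMap O K a1 * (algebraMap O K α₁ * algebraMap O K β₂ + algebraMap O K α₂ * algebraMap O K β₁) + 2 * algebraMap O K a2 * algebraMap O K β₁ * algebraMap O K β₂) := by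
        rw [hf1def]; simp only [map_sub, map_mul, map_add, map_pow, map_ofNat]
      have hf2K : algebraMap O K f2 = algebraMap O K α₁ *
            (algebraMap O K b0 * (algebraMap O K α₂)^2 + algebraMap O K b1 * algebraMap O K α₂ * algebraMap O K β₂ + algebraMap O K b2 * (algebraMap O K β₂)^2)
          - algebraMap O K β₁ *
            (algebraMap O K a0 * (algebraMap O K α₂)^2 + algebraMap O K a1 * algebraMap O K α₂ * algebraMap O K β₂ + algebraMap O K a2 * (algebraMap O K β₂)^2) := by
        rw [hf2def]; simp only [map_sub, map_mul, map_add, map_pow]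
      have hbK : algebraMap O K e0 * (algebraMap O K f1 * algebraMap O K ei)
          = algebraMap O K f1 := by
        have h : e0 * (f1 * ei) = f1 := by linear_combination f1 * heinv
        have h2 := congrArg (algebraMap O K) h
        simpa only [map_mul] using h2
      have hcK : algebraMap O K e0 * (algebraMap O K f2 * algebraMap O K ei)
          = algebraMap O K f2 := by
        have h : e0 * (f2 * ei) = f2 := by linear_combination f2 * heinv
        have h2 := congrArg (algebraMap O K) h
        simpa only [map_mul] using h2
      simp only [qform, map_mul, map_sub]
      exact auxD _ _ _ _ _ _ _ _ _ _ _ _ _ _ _ _ x y h1K hdK hf1K hf2K hbK hcK
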